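/- Let S and A be finite sets, let π be a policy, let T^o be a transition kernel, let μ be an initial distribution on S, and let γ ∈ [0,1). For every transition kernel T satisfying D_TV(T(·|s,a), T^o(·|s,a)) ≤ ε' for all (s,a) ∈ S × A, the joint occupancy measures ρ^π_T(s,a,s') := π(a|s)·ρ^π_T(s)·T(s'|s,a) and ρ^π_{T^o}(s,a,s') := π(a|s)·ρ^π_{T^o}(s)·T^o(s'|s,a) satisfy D_TV(ρ^π_T(·,·,·), ρ^π_{T^o}(·,·,·)) ≤ ε'/(1 − γ). -/
import Mathlib
open Finset

section Aux
variable {S : Type*} [Fintype S]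

lemma vecMul_apply' (v : S → ℝ) (M : Matrix S S ℝ) (s : S) :
    Matrix.vecMul v M s = ∑ i, v i * M i s := rfl

lemma l1_vecMul_le {c : ℝ} (v : S → ℝ) (M : Matrix S S ℝ)
    (hM : ∀ s, ∑ s', |M s s'| ≤ c) :
    ∑ s', |Matrix.vecMul v M s'| ≤ c * ∑ s, |v s| := by
  calc ∑ s', |Matrix.vecMul v M s'| ≤ ∑ s', ∑ i, |v i| * |M i s'| := by
        refine Finset.sum_le_sum fun s' _ => ?_
        rw [vecMul_apply']
        exact (Finset.abs_sum_le_sum_abs _ _).trans (le_of_eq (by simp [abs_mul]))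
    _ = ∑ i, |v i| * ∑ s', |M i s'| := by
        rw [Finset.sum_comm]; simp [Finset.mul_sum]
    _ ≤ ∑ i, |v i| * c :=
        Finset.sum_le_sum fun i _ => mul_le_mul_of_nonneg_left (hM i) (abs_nonneg _)
    _ = c * ∑ s, |v s| := by rw [← Finset.sum_mul, mul_comm]

lemma sum_vecMul_eq (v : S → ℝ) (M : Matrix S S ℝ) (hM1 : ∀ s, ∑ s', M s s' = 1) :
    ∑ s', Matrix.vecMul v M s' = ∑ s, v s := by
  simp only [vecMul_apply']
  rw [Finset.sum_comm]
  simp [← Finset.mul_sum, hM1]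

lemma vecMul_nonneg' (v : S → ℝ) (M : Matrix S S ℝ) (hM : ∀ s s', 0 ≤ M s s')
    (hv : ∀ s, 0 ≤ v s) (s : S) : 0 ≤ Matrix.vecMul v M s :=
  Finset.sum_nonneg fun i _ => mul_nonneg (hv i) (hM i s)

end Aux

/-- Policy-averaged transition matrix `P(s,s') = ∑ₐ π(a|s) T(s'|s,a)`. -/
noncomputable def Pmat {S A : Type*} [Fintype A] (π : S → A → ℝ) (T : S → A → S → ℝ) :
    Matrix S S ℝ :=
  Matrix.of fun s s' => ∑ a, π s a * T s a s'

/-- Discounted state-occupancy measure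
`ρ^π_T(s) = (1-γ) ∑ₜ γ^t (μ P^t)(s)`. -/
noncomputable def occ {S A : Type*} [Fintype S] [DecidableEq S] [Fintype A]
    (π : S → A → ℝ) (T : S → A → S → ℝ) (μ : S → ℝ) (γ : ℝ) (s : S) : ℝ :=
  (1 - γ) * ∑' t : ℕ, γ ^ t * Matrix.vecMul μ (Pmat π T ^ t) s

/-- Lemma 2: TV bound between joint occupancy measures
`ρ^π_T(s,a,s') = π(a|s) ρ^π_T(s) T(s'|s,a)` under perturbed transition kernels. -/
theorem stmt6 {S A : Type*} [Fintype S] [DecidableEq S] [Fintype A]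
    (π : S → A → ℝ) (hπ0 : ∀ s a, 0 ≤ π s a) (hπ1 : ∀ s, ∑ a, π s a = 1)
    (To : S → A → S → ℝ) (hTo0 : ∀ s a s', 0 ≤ To s a s')
    (hTo1 : ∀ s a, ∑ s', To s a s' = 1)
    (μ : S → ℝ) (hμ0 : ∀ s, 0 ≤ μ s) (hμ1 : ∑ s, μ s = 1)
    (γ : ℝ) (hγ0 : 0 ≤ γ) (hγ1 : γ < 1) (ε' : ℝ)
    (T : S → A → S → ℝ) (hT0 : ∀ s a s', 0 ≤ T s a s')
    (hT1 : ∀ s a, ∑ s', T s a s' = 1)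
    (hTV : ∀ s a, (1/2) * ∑ s', |T s a s' - To s a s'| ≤ ε') :
    (1/2) * ∑ x : S × A × S,
        |π x.1 x.2.1 * occ π T μ γ x.1 * T x.1 x.2.1 x.2.2 -
          π x.1 x.2.1 * occ π To μ γ x.1 * To x.1 x.2.1 x.2.2| ≤
      ε' / (1 - γ) := by
  have h1γ : (0:ℝ) < 1 - γ := by linarith
  -- nonemptiness and ε' ≥ 0
  have hSne : (univ : Finset S).Nonempty := by
    by_contra h
    rw [Finset.not_nonempty_iff_eq_empty] at h
    rw [h, Finset.sum_empty] at hμ1; norm_num at hμ1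
  obtain ⟨s0, -⟩ := hSne
  have hAne : (univ : Finset A).Nonempty := by
    by_contra h
    rw [Finset.not_nonempty_iff_eq_empty] at h
    have := hπ1 s0
    rw [h, Finset.sum_empty] at this; norm_num at this
  obtain ⟨a0, -⟩ := hAne
  have hε : 0 ≤ ε' := by
    refine le_trans ?_ (hTV s0 a0)
    positivity
  -- basic TV bound in unscaled form
  have hTV2 : ∀ s a, ∑ s', |T s a s' - To s a s'| ≤ 2 * ε' := by
    intro s a; have := hTV s a; linarith
  set P := Pmat π T with hP
  set Po := Pmat π To with hPo
  have hPapp : ∀ s s', P s s' = ∑ a, π s a * T s a s' := fun _ _ => rfl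
  have hPoapp : ∀ s s', Po s s' = ∑ a, π s a * To s a s' := fun _ _ => rfl
  have hP0 : ∀ s s', 0 ≤ P s s' := fun s s' =>
    Finset.sum_nonneg fun a _ => mul_nonneg (hπ0 s a) (hT0 s a s')
  have hPo0 : ∀ s s', 0 ≤ Po s s' := fun s s' =>
    Finset.sum_nonneg fun a _ => mul_nonneg (hπ0 s a) (hTo0 s a s')
  have hP1 : ∀ s, ∑ s', P s s' = 1 := by
    intro s
    simp only [hPapp]
    rw [Finset.sum_comm]
    simp [← Finset.mul_sum, hT1, hπ1]
  have hPo1 : ∀ s, ∑ s', Po s s' = 1 := by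
    intro s
    simp only [hPoapp]
    rw [Finset.sum_comm]
    simp [← Finset.mul_sum, hTo1, hπ1]
  have hPabs : ∀ s, ∑ s', |P s s'| ≤ 1 := fun s =>
    le_of_eq (by rw [Finset.sum_congr rfl fun s' _ => abs_of_nonneg (hP0 s s'), hP1])
  -- row-wise L1 bound on P - Po
  have hPd : ∀ s, ∑ s', |(P - Po) s s'| ≤ 2 * ε' := by
    intro s
    calc ∑ s', |(P - Po) s s'| ≤ ∑ s', ∑ a, π s a * |T s a s' - To s a s'| := by
          refine Finset.sum_le_sum fun s' _ => ?_
          have : (P - Po) s s' = ∑ a, π s a * (T s a s' - To s a s') := by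
            simp [hPapp, hPoapp, mul_sub, Finset.sum_sub_distrib]
          rw [this]
          refine (Finset.abs_sum_le_sum_abs _ _).trans (le_of_eq ?_)
          refine Finset.sum_congr rfl fun a _ => ?_
          rw [abs_mul, abs_of_nonneg (hπ0 s a)]
      _ = ∑ a, π s a * ∑ s', |T s a s' - To s a s'| := by
          rw [Finset.sum_comm]; simp [Finset.mul_sum]
      _ ≤ ∑ a, π s a * (2 * ε') :=
          Finset.sum_le_sum fun a _ => mul_le_mul_of_nonneg_left (hTV2 s a) (hπ0 s a)
      _ = 2 * ε' := by rw [← Finset.sum_mul, hπ1, one_mul]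
  -- occupancy iterates
  set v : ℕ → S → ℝ := fun t => Matrix.vecMul μ (P ^ t) with hv
  set w : ℕ → S → ℝ := fun t => Matrix.vecMul μ (Po ^ t) with hw
  have hvsucc : ∀ t, v (t + 1) = Matrix.vecMul (v t) P := by
    intro t; rw [hv]; simp only [pow_succ, ← Matrix.vecMul_vecMul]
  have hwsucc : ∀ t, w (t + 1) = Matrix.vecMul (w t) Po := by
    intro t; rw [hw]; simp only [pow_succ, ← Matrix.vecMul_vecMul]
  have hv0 : ∀ t s, 0 ≤ v t s := by
    intro t
    induction t with
    | zero => intro s; simpa [hv, Matrix.vecMul_one] using hμ0 s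
    | succ t ih => intro s; rw [hvsucc]; exact vecMul_nonneg' _ _ hP0 ih s
  have hw0 : ∀ t s, 0 ≤ w t s := by
    intro t
    induction t with
    | zero => intro s; simpa [hw, Matrix.vecMul_one] using hμ0 s
    | succ t ih => intro s; rw [hwsucc]; exact vecMul_nonneg' _ _ hPo0 ih s
  have hv1 : ∀ t, ∑ s, v t s = 1 := by
    intro t
    induction t with
    | zero => simpa [hv, Matrix.vecMul_one] using hμ1
    | succ t ih => rw [hvsucc, sum_vecMul_eq _ _ hP1, ih]
  have hw1 : ∀ t, ∑ s, w t s = 1 := by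
    intro t
    induction t with
    | zero => simpa [hw, Matrix.vecMul_one] using hμ1
    | succ t ih => rw [hwsucc, sum_vecMul_eq _ _ hPo1, ih]
  -- L1 distance between iterates grows at most linearly
  have hvw : ∀ t : ℕ, ∑ s, |v t s - w t s| ≤ 2 * t * ε' := by
    intro t
    induction t with
    | zero => simp [hv, hw, Matrix.vecMul_one]
    | succ t ih =>
        have key : ∀ s, v (t + 1) s - w (t + 1) s =
            Matrix.vecMul (fun i => v t i - w t i) P s +
              Matrix.vecMul (w t) (P - Po) s := by
          intro s
          rw [hvsucc, hwsucc]
          simp only [vecMul_apply', Matrix.sub_apply]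
          rw [← Finset.sum_add_distrib, ← Finset.sum_sub_distrib]
          refine Finset.sum_congr rfl fun i _ => by ring
        calc ∑ s, |v (t + 1) s - w (t + 1) s|
            ≤ ∑ s, (|Matrix.vecMul (fun i => v t i - w t i) P s| +
                |Matrix.vecMul (w t) (P - Po) s|) := by
              refine Finset.sum_le_sum fun s _ => ?_
              rw [key s]; exact abs_add_le _ _
          _ = (∑ s, |Matrix.vecMul (fun i => v t i - w t i) P s|) +
                ∑ s, |Matrix.vecMul (w t) (P - Po) s| := Finset.sum_add_distrib
          _ ≤ 1 * (∑ s, |v t s - w t s|) + (2 * ε') * ∑ s, |w t s| := by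
              gcongr
              · exact l1_vecMul_le _ _ hPabs
              · exact l1_vecMul_le _ _ hPd
          _ ≤ 2 * t * ε' + 2 * ε' * 1 := by
              have : ∑ s, |w t s| = 1 := by
                rw [Finset.sum_congr rfl fun s _ => abs_of_nonneg (hw0 t s), hw1]
              rw [this, one_mul]
              linarith [ih]
          _ = 2 * (t + 1 : ℕ) * ε' := by push_cast; ring
  -- summability facts
  have hgeo : Summable fun t : ℕ => γ ^ t := summable_geometric_of_lt_one hγ0 hγ1
  have hvle1 : ∀ t s, v t s ≤ 1 := by
    intro t s
    rw [← hv1 t]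
    exact Finset.single_le_sum (fun i _ => hv0 t i) (Finset.mem_univ s)
  have hwle1 : ∀ t s, w t s ≤ 1 := by
    intro t s
    rw [← hw1 t]
    exact Finset.single_le_sum (fun i _ => hw0 t i) (Finset.mem_univ s)
  have hsv : ∀ s, Summable fun t => γ ^ t * v t s := by
    intro s
    refine Summable.of_nonneg_of_le
      (fun t => mul_nonneg (pow_nonneg hγ0 t) (hv0 t s)) (fun t => ?_) hgeo
    calc γ ^ t * v t s ≤ γ ^ t * 1 :=
          mul_le_mul_of_nonneg_left (hvle1 t s) (pow_nonneg hγ0 t)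
      _ = γ ^ t := mul_one _
  have hsw : ∀ s, Summable fun t => γ ^ t * w t s := by
    intro s
    refine Summable.of_nonneg_of_le
      (fun t => mul_nonneg (pow_nonneg hγ0 t) (hw0 t s)) (fun t => ?_) hgeo
    calc γ ^ t * w t s ≤ γ ^ t * 1 :=
          mul_le_mul_of_nonneg_left (hwle1 t s) (pow_nonneg hγ0 t)
      _ = γ ^ t := mul_one _
  have hsd : ∀ s, Summable fun t => γ ^ t * |v t s - w t s| := by
    intro s
    refine Summable.of_nonneg_of_le
      (fun t => mul_nonneg (pow_nonneg hγ0 t) (abs_nonneg _)) (fun t => ?_)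
      (hgeo.mul_left 2)
    have : |v t s - w t s| ≤ 2 := by
      have := abs_sub_abs_le_abs_sub (v t s) (w t s)
      have h1 : |v t s| ≤ 1 := abs_le.2 ⟨by linarith [hv0 t s], hvle1 t s⟩
      have h2 : |w t s| ≤ 1 := abs_le.2 ⟨by linarith [hw0 t s], hwle1 t s⟩
      calc |v t s - w t s| ≤ |v t s| + |w t s| := abs_sub _ _
        _ ≤ 2 := by linarith
    calc γ ^ t * |v t s - w t s| ≤ γ ^ t * 2 :=
          mul_le_mul_of_nonneg_left this (pow_nonneg hγ0 t)
      _ = 2 * γ ^ t := mul_comm _ _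
  -- occ nonneg and sums to 1
  have hocc : ∀ s, occ π T μ γ s = (1 - γ) * ∑' t : ℕ, γ ^ t * v t s := fun s => rfl
  have hocco : ∀ s, occ π To μ γ s = (1 - γ) * ∑' t : ℕ, γ ^ t * w t s := fun s => rfl
  have hρ0 : ∀ s, 0 ≤ occ π T μ γ s := by
    intro s
    rw [hocc]
    exact mul_nonneg (le_of_lt h1γ)
      (tsum_nonneg fun t => mul_nonneg (pow_nonneg hγ0 t) (hv0 t s))
  have hρ1 : ∑ s, occ π T μ γ s = 1 := by
    simp only [hocc]
    rw [← Finset.mul_sum, ← Summable.tsum_finsetSum fun s _ => hsv s]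
    have : ∀ t : ℕ, ∑ s, γ ^ t * v t s = γ ^ t := by
      intro t; rw [← Finset.mul_sum, hv1, mul_one]
    rw [tsum_congr this, tsum_geometric_of_lt_one hγ0 hγ1]
    field_simp
  -- L1 bound on occ difference
  have hρd : ∑ s, |occ π T μ γ s - occ π To μ γ s| ≤ 2 * γ * ε' / (1 - γ) := by
    have habs : ∀ s, |occ π T μ γ s - occ π To μ γ s| ≤
        (1 - γ) * ∑' t : ℕ, γ ^ t * |v t s - w t s| := by
      intro s
      rw [hocc, hocco, ← mul_sub, abs_mul, abs_of_pos h1γ]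
      refine mul_le_mul_of_nonneg_left ?_ (le_of_lt h1γ)
      rw [← Summable.tsum_sub (hsv s) (hsw s)]
      have heq : ∀ t : ℕ, γ ^ t * v t s - γ ^ t * w t s = γ ^ t * (v t s - w t s) := by
        intro t; ring
      rw [tsum_congr heq]
      have := norm_tsum_le_tsum_norm (f := fun t : ℕ => γ ^ t * (v t s - w t s)) ?_
      · refine this.trans (le_of_eq (tsum_congr fun t => ?_))
        rw [Real.norm_eq_abs, abs_mul, abs_of_nonneg (pow_nonneg hγ0 t)]
      · refine (hsd s).congr fun t => ?_
        rw [Real.norm_eq_abs, abs_mul, abs_of_nonneg (pow_nonneg hγ0 t)]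
    calc ∑ s, |occ π T μ γ s - occ π To μ γ s|
        ≤ ∑ s, (1 - γ) * ∑' t : ℕ, γ ^ t * |v t s - w t s| :=
          Finset.sum_le_sum fun s _ => habs s
      _ = (1 - γ) * ∑' t : ℕ, ∑ s, γ ^ t * |v t s - w t s| := by
          rw [← Finset.mul_sum, ← Summable.tsum_finsetSum fun s _ => hsd s]
      _ ≤ (1 - γ) * ∑' t : ℕ, γ ^ t * (2 * t * ε') := by
          refine mul_le_mul_of_nonneg_left ?_ (le_of_lt h1γ)
          refine Summable.tsum_le_tsum (fun t => ?_) ?_ ?_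
          · rw [← Finset.mul_sum]
            exact mul_le_mul_of_nonneg_left (hvw t) (pow_nonneg hγ0 t)
          · exact (hasSum_sum fun s _ => (hsd s).hasSum).summable
          · refine ((summable_pow_mul_geometric_of_norm_lt_one 1
              (by rwa [Real.norm_eq_abs, abs_of_nonneg hγ0])).mul_left (2 * ε')).congr
              fun t => ?_
            ring
      _ = 2 * γ * ε' / (1 - γ) := by
          have hts : (∑' t : ℕ, γ ^ t * (2 * t * ε')) =
              2 * ε' * ∑' t : ℕ, (t : ℝ) * γ ^ t := by
            rw [← tsum_mul_left]
            exact tsum_congr fun t => by ring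
          rw [hts, tsum_coe_mul_geometric_of_norm_lt_one
            (by rwa [Real.norm_eq_abs, abs_of_nonneg hγ0])]
          field_simp
  -- assemble
  have key1 : ∀ s, (∑ a, ∑ s',
      |π s a * occ π T μ γ s * T s a s' - π s a * occ π To μ γ s * To s a s'|) ≤
      2 * ε' * occ π T μ γ s + |occ π T μ γ s - occ π To μ γ s| := by
    intro s
    set ρ := occ π T μ γ s
    set ρo := occ π To μ γ s
    calc (∑ a, ∑ s', |π s a * ρ * T s a s' - π s a * ρo * To s a s'|)
        ≤ ∑ a, ∑ s', (π s a * ρ * |T s a s' - To s a s'| +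
            π s a * To s a s' * |ρ - ρo|) := by
          refine Finset.sum_le_sum fun a _ => Finset.sum_le_sum fun s' _ => ?_
          have hdec : π s a * ρ * T s a s' - π s a * ρo * To s a s' =
              π s a * ρ * (T s a s' - To s a s') + π s a * To s a s' * (ρ - ρo) := by
            ring
          rw [hdec]
          refine (abs_add_le _ _).trans (le_of_eq ?_)
          rw [abs_mul, abs_mul, abs_mul, abs_mul,
            abs_of_nonneg (hπ0 s a), abs_of_nonneg (hρ0 s), abs_of_nonneg (hTo0 s a s')]
      _ = (∑ a, π s a * ρ * ∑ s', |T s a s' - To s a s'|) +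
            ∑ a, π s a * |ρ - ρo| * ∑ s', To s a s' := by
          rw [← Finset.sum_add_distrib]
          refine Finset.sum_congr rfl fun a _ => ?_
          rw [Finset.sum_add_distrib, Finset.mul_sum, Finset.mul_sum]
          congr 1
          refine Finset.sum_congr rfl fun s' _ => by ring
      _ ≤ (∑ a, π s a * ρ * (2 * ε')) + ∑ a, π s a * |ρ - ρo| * 1 := by
          refine add_le_add (Finset.sum_le_sum fun a _ => ?_)
            (Finset.sum_le_sum fun a _ => le_of_eq ?_)
          · exact mul_le_mul_of_nonneg_left (hTV2 s a)
              (mul_nonneg (hπ0 s a) (hρ0 s))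
          · rw [hTo1 s a]
      _ = 2 * ε' * ρ + |ρ - ρo| := by
          simp only [mul_one]
          rw [← Finset.sum_mul, ← Finset.sum_mul, ← Finset.sum_mul, hπ1]
          ring
  have hsplit : ∑ x : S × A × S,
      |π x.1 x.2.1 * occ π T μ γ x.1 * T x.1 x.2.1 x.2.2 -
        π x.1 x.2.1 * occ π To μ γ x.1 * To x.1 x.2.1 x.2.2| =
      ∑ s, ∑ a, ∑ s', |π s a * occ π T μ γ s * T s a s' -
        π s a * occ π To μ γ s * To s a s'| := by
    rw [Fintype.sum_prod_type]
    exact Finset.sum_congr rfl fun s _ => by rw [Fintype.sum_prod_type]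
  rw [hsplit]
  have hmain : (∑ s : S, ∑ a, ∑ s', |π s a * occ π T μ γ s * T s a s' -
      π s a * occ π To μ γ s * To s a s'|) ≤
      2 * ε' * 1 + 2 * γ * ε' / (1 - γ) := by
    calc (∑ s : S, ∑ a, ∑ s', |π s a * occ π T μ γ s * T s a s' -
        π s a * occ π To μ γ s * To s a s'|)
        ≤ ∑ s, (2 * ε' * occ π T μ γ s + |occ π T μ γ s - occ π To μ γ s|) :=
          Finset.sum_le_sum fun s _ => key1 s
      _ = 2 * ε' * (∑ s, occ π T μ γ s) + ∑ s, |occ π T μ γ s - occ π To μ γ s| := by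
          rw [Finset.sum_add_distrib, Finset.mul_sum]
      _ ≤ 2 * ε' * 1 + 2 * γ * ε' / (1 - γ) := by
          rw [hρ1]
          linarith [hρd]
  have : 2 * ε' * 1 + 2 * γ * ε' / (1 - γ) = 2 * (ε' / (1 - γ)) := by
    field_simp
    ring
  linarith [hmain]
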